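/- Let N ≥ 1 be an integer, σ, γ ∈ (−1,0), and p, q > 1 with p > max{σ/γ, 1} and q > max{γ/σ, 1}. Assume N/2 ≥ max{ ((σ+1)(pq−1)+p+1)/(pq−1), ((γ+1)(pq−1)+q+1)/(pq−1) }. Then there exist real numbers q₁, q₂ > 0 such that: max{1/(q d₂), 1/k₁ − 2/N} < 1/q₁ < min{1/d₁, 1/q}; max{1/(p d₁), 1/k₂ − 2/N} < 1/q₂ < min{1/d₂, 1/p}; p/q₂ − 1/q₁ < 2/N; and q/q₁ − 1/q₂ < 2/N. -/

import Mathlib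

/-!
In the scale `X = N(pq-1)/(2q₁)`, `Y = N(pq-1)/(2q₂)` all the constraints become linear:
`X` must lie strictly between `max((q+1)/q, (pq-1)σ+p+1)` and `min(p+1, N(pq-1)/(2q))`,
symmetrically for `Y`, and the coupling conditions read `pY - X < pq-1`, `qX - Y < pq-1`.
The corner `(p+1, q+1)` meets both coupling conditions with equality. Moving inwards to
`X = p+1 - c(pq-1)/q`, `Y = q+1 - d(pq-1)/p` with `c ∈ (-γ, min(-qσ, 1))` and
`d ∈ (-σ, min(-pγ, 1))` satisfies every constraint strictly; the criticality assumption is what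
keeps `qX` and `pY` below `N(pq-1)/2`, and the two intervals are nonempty precisely because
`qσ < γ` and `pγ < σ`.
-/

noncomputable def scaledReciprocal (p q c : ℝ) : ℝ := p + 1 - c * (p * q - 1) / q

section
variable {p q σ γ c d m n X Y : ℝ}

lemma scaledReciprocal_bounds (hp : 1 < p) (hq : 1 < q) (hc : 0 < c) (hc1 : c < 1)
    (hcσ : c < -(q * σ)) (hγc : -γ < c) (hm : (γ + 1) * (p * q - 1) + q + 1 ≤ m) :
    (q + 1) / q < scaledReciprocal p q c ∧ (p * q - 1) * σ + p + 1 < scaledReciprocal p q c ∧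
      scaledReciprocal p q c < p + 1 ∧ q * scaledReciprocal p q c < m := by
  have hq0 : 0 < q := by linarith
  have hA : 0 < p * q - 1 := by nlinarith
  unfold scaledReciprocal
  refine ⟨?_, ?_, ?_, ?_⟩
  · have : 0 < (1 - c) * (p * q - 1) / q := div_pos (mul_pos (by linarith) hA) hq0
    rw [← sub_pos]; convert this using 1; field_simp; ring
  · have : 0 < (-(q * σ) - c) * (p * q - 1) / q := div_pos (mul_pos (by linarith) hA) hq0
    rw [← sub_pos]; convert this using 1; field_simp; ring
  · have : 0 < c * (p * q - 1) / q := by positivity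
    linarith
  · have : 0 < (c + γ) * (p * q - 1) := mul_pos (by linarith) hA
    have hqX : q * (p + 1 - c * (p * q - 1) / q) = q * (p + 1) - c * (p * q - 1) := by field_simp
    linarith

lemma scaledReciprocal_coupling (hp : 1 < p) (hq : 1 < q) (hcd : c < q * d) :
    p * scaledReciprocal q p d - scaledReciprocal p q c < p * q - 1 := by
  have hq0 : 0 < q := by linarith
  have hA : 0 < p * q - 1 := by nlinarith
  have : 0 < (q * d - c) * (p * q - 1) / q := div_pos (mul_pos (by linarith) hA) hq0
  rw [← sub_pos]; convert this using 1; unfold scaledReciprocal; field_simp; ring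

lemma exists_scaled_reciprocals (hp : 1 < p) (hq : 1 < q) (hσ : -1 < σ) (hγ : -1 < γ)
    (hpγ : p * γ < σ) (hqσ : q * σ < γ) (hσm : (σ + 1) * (p * q - 1) + p + 1 ≤ m)
    (hγm : (γ + 1) * (p * q - 1) + q + 1 ≤ m) :
    ∃ X Y : ℝ,
      ((q + 1) / q < X ∧ (p * q - 1) * σ + p + 1 < X ∧ X < p + 1 ∧ q * X < m) ∧
      ((p + 1) / p < Y ∧ (p * q - 1) * γ + q + 1 < Y ∧ Y < q + 1 ∧ p * Y < m) ∧
      p * Y - X < p * q - 1 ∧ q * X - Y < p * q - 1 := by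
  have hA : 0 < p * q - 1 := by nlinarith
  -- `pqγ < qσ < γ` with `pq > 1` forces `γ < 0`; symmetrically `σ < 0`
  have hγ₀ : γ < 0 := by nlinarith [mul_lt_mul_of_pos_left hpγ (by linarith : 0 < q)]
  have hσ₀ : σ < 0 := by nlinarith [mul_lt_mul_of_pos_left hqσ (by linarith : 0 < p)]
  obtain ⟨c, hγc, hc⟩ := exists_between (lt_min (by linarith) (by linarith) :
    -γ < min (-(q * σ)) 1)
  obtain ⟨d, hσd, hd⟩ := exists_between (lt_min (by linarith) (by linarith) :
    -σ < min (-(p * γ)) 1)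
  have hcd : c < q * d := by
    nlinarith [hc.trans_le (min_le_left _ _), mul_lt_mul_of_pos_left hσd (by linarith : 0 < q)]
  have hdc : d < p * c := by
    nlinarith [hd.trans_le (min_le_left _ _), mul_lt_mul_of_pos_left hγc (by linarith : 0 < p)]
  refine ⟨scaledReciprocal p q c, scaledReciprocal q p d,
    scaledReciprocal_bounds hp hq (by linarith) (hc.trans_le (min_le_right _ _))
      (hc.trans_le (min_le_left _ _)) hγc hγm,
    mul_comm q p ▸ scaledReciprocal_bounds hq hp (by linarith) (hd.trans_le (min_le_right _ _))
      (hd.trans_le (min_le_left _ _)) hσd (mul_comm p q ▸ hσm),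
    scaledReciprocal_coupling hp hq hcd, mul_comm q p ▸ scaledReciprocal_coupling hq hp hdc⟩

lemma reciprocal_bounds_of_scaled (hn : 0 < n) (hq : 0 < q) (hA : 0 < p * q - 1)
    (h₁ : (q + 1) / q < X) (h₂ : (p * q - 1) * σ + p + 1 < X) (h₃ : X < p + 1)
    (h₄ : q * X < n * (p * q - 1) / 2) :
    max (1 / (q * (n * (p * q - 1) / (2 * (q + 1)))))
        (1 / (n * (p * q - 1) / (2 * ((p * q - 1) * (1 + σ) + p + 1))) - 2 / n)
      < 1 / (n * (p * q - 1) / (2 * X)) ∧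
      1 / (n * (p * q - 1) / (2 * X)) < min (1 / (n * (p * q - 1) / (2 * (p + 1)))) (1 / q) := by
  have hscale : ∀ Z, 1 / (n * (p * q - 1) / (2 * Z)) = 2 / (n * (p * q - 1)) * Z := fun Z => by
    rw [one_div_div]; ring
  have e₁ : 1 / (q * (n * (p * q - 1) / (2 * (q + 1))))
      = 2 / (n * (p * q - 1)) * ((q + 1) / q) := by
    field_simp
  have e₂ : 1 / (n * (p * q - 1) / (2 * ((p * q - 1) * (1 + σ) + p + 1))) - 2 / n
      = 2 / (n * (p * q - 1)) * ((p * q - 1) * σ + p + 1) := by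
    rw [hscale]; field_simp; ring
  have e₃ : 1 / q = 2 / (n * (p * q - 1)) * (n * (p * q - 1) / 2 / q) := by
    rw [mul_div_assoc', div_mul_div_cancel₀' two_ne_zero, div_self (by positivity)]
  have h₄' : X < n * (p * q - 1) / 2 / q := by rwa [lt_div_iff₀ hq, mul_comm]
  rw [e₁, e₂, e₃, hscale, hscale]
  exact ⟨max_lt (by gcongr) (by gcongr), lt_min (by gcongr) (by gcongr)⟩

lemma reciprocal_coupling_of_scaled (hn : 0 < n) (hA : 0 < p * q - 1)
    (h : p * Y - X < p * q - 1) :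
    p / (n * (p * q - 1) / (2 * Y)) - 1 / (n * (p * q - 1) / (2 * X)) < 2 / n := by
  have e : p / (n * (p * q - 1) / (2 * Y)) - 1 / (n * (p * q - 1) / (2 * X))
      = 2 / (n * (p * q - 1)) * (p * Y - X) := by
    rw [div_div_eq_mul_div, one_div_div]; ring
  have e' : 2 / n = 2 / (n * (p * q - 1)) * (p * q - 1) := by field_simp
  rw [e, e']
  gcongr

end

/-- Lemma 4.3: under the global-existence conditions there exist auxiliary exponents
`q₁, q₂ > 0` satisfying the required system of strict inequalities, where
`d₁ = N(pq-1)/(2(p+1))`, `d₂ = N(pq-1)/(2(q+1))`,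
`k₁ = N(pq-1)/(2[(pq-1)(1+σ)+p+1])`, `k₂ = N(pq-1)/(2[(pq-1)(1+γ)+q+1])`. -/
theorem auxiliary_exponents_exist (N : ℕ) (hN : 1 ≤ N) (p q σ γ : ℝ)
    (hp : max (σ / γ) 1 < p) (hq : max (γ / σ) 1 < q)
    (hσ : σ ∈ Set.Ioo (-1:ℝ) 0) (hγ : γ ∈ Set.Ioo (-1:ℝ) 0)
    (hcrit : max (((σ + 1) * (p * q - 1) + p + 1) / (p * q - 1))
      (((γ + 1) * (p * q - 1) + q + 1) / (p * q - 1)) ≤ (N : ℝ) / 2) :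
    ∃ q₁ q₂ : ℝ, 0 < q₁ ∧ 0 < q₂ ∧
      (max (1 / (q * ((N : ℝ) * (p * q - 1) / (2 * (q + 1)))))
          (1 / ((N : ℝ) * (p * q - 1) / (2 * ((p * q - 1) * (1 + σ) + p + 1))) - 2 / (N : ℝ))
        < 1 / q₁ ∧
        1 / q₁ < min (1 / ((N : ℝ) * (p * q - 1) / (2 * (p + 1)))) (1 / q)) ∧
      (max (1 / (p * ((N : ℝ) * (p * q - 1) / (2 * (p + 1)))))
          (1 / ((N : ℝ) * (p * q - 1) / (2 * ((p * q - 1) * (1 + γ) + q + 1))) - 2 / (N : ℝ))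
        < 1 / q₂ ∧
        1 / q₂ < min (1 / ((N : ℝ) * (p * q - 1) / (2 * (q + 1)))) (1 / p)) ∧
      p / q₂ - 1 / q₁ < 2 / (N : ℝ) ∧
      q / q₁ - 1 / q₂ < 2 / (N : ℝ) := by
  obtain ⟨hσ₁, hσ₀⟩ := hσ
  obtain ⟨hγ₁, hγ₀⟩ := hγ
  have hp₁ : 1 < p := (le_max_right _ _).trans_lt hp
  have hq₁ : 1 < q := (le_max_right _ _).trans_lt hq
  have hpγ : p * γ < σ := (div_lt_iff_of_neg hγ₀).mp ((le_max_left _ _).trans_lt hp)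
  have hqσ : q * σ < γ := (div_lt_iff_of_neg hσ₀).mp ((le_max_left _ _).trans_lt hq)
  have hn : 0 < (N : ℝ) := by exact_mod_cast hN
  have hA : 0 < p * q - 1 := by nlinarith
  have hA' : 0 < q * p - 1 := by rwa [mul_comm]
  obtain ⟨hσm, hγm⟩ := max_le_iff.mp hcrit
  rw [div_le_iff₀ hA, div_mul_eq_mul_div] at hσm hγm
  obtain ⟨X, Y, ⟨hX₁, hX₂, hX₃, hX₄⟩, ⟨hY₁, hY₂, hY₃, hY₄⟩, hXY, hYX⟩ :=
    exists_scaled_reciprocals hp₁ hq₁ hσ₁ hγ₁ hpγ hqσ hσm hγm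
  have hX : 0 < X := (by positivity : (0 : ℝ) < (q + 1) / q).trans hX₁
  have hY : 0 < Y := (by positivity : (0 : ℝ) < (p + 1) / p).trans hY₁
  have hq₂bounds := reciprocal_bounds_of_scaled hn (by linarith) hA' hY₁
    (by rwa [mul_comm q p]) hY₃ (by rwa [mul_comm q p])
  have hqcoupling := reciprocal_coupling_of_scaled hn hA' (X := Y) (Y := X) (by rwa [mul_comm q p])
  rw [mul_comm q p] at hq₂bounds hqcoupling
  exact ⟨N * (p * q - 1) / (2 * X), N * (p * q - 1) / (2 * Y), by positivity, by positivity,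
    reciprocal_bounds_of_scaled hn (by linarith) hA hX₁ hX₂ hX₃ hX₄, hq₂bounds,
    reciprocal_coupling_of_scaled hn hA hXY, hqcoupling⟩
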